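/- The direct product of two nontrivial connected graphs G and H is connected if and only if at least one of G and H is not bipartite. -/

import Mathlib

open SimpleGraph

universe u v

variable {α : Type u} {β : Type v}

/-- Direct (tensor) product of two simple graphs. -/
def SimpleGraph.tensorProd (G : SimpleGraph α) (H : SimpleGraph β) :
    SimpleGraph (α × β) where
  Adj x y := G.Adj x.1 y.1 ∧ H.Adj x.2 y.2
  symm := ⟨fun x y h => ⟨h.1.symm, h.2.symm⟩⟩
  loopless := ⟨fun x h => G.loopless.1 x.1 h.1⟩

/-- Direct (tensor) product of a family of simple graphs. -/
def SimpleGraph.piTensorProd {ι : Type*} {V : ι → Type*}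
    (G : ∀ i, SimpleGraph (V i)) : SimpleGraph (∀ i, V i) where
  Adj f g := f ≠ g ∧ ∀ i, (G i).Adj (f i) (g i)
  symm := ⟨fun f g h => ⟨h.1.symm, fun i => (h.2 i).symm⟩⟩
  loopless := ⟨fun f h => h.1 rfl⟩

/-- `S` is a vertex cut of `G`: deleting `S` leaves a disconnected graph. -/
def SimpleGraph.IsVertexCut (G : SimpleGraph α) (S : Set α) : Prop :=
  ¬ (G.induce Sᶜ).Connected

/-- Vertex connectivity: minimum size of a set `S` such that `G - S` is
disconnected or has at most one vertex. -/
noncomputable def SimpleGraph.vConn (G : SimpleGraph α) : ℕ :=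
  sInf {n | ∃ S : Set α, S.ncard = n ∧
    (G.IsVertexCut S ∨ Nat.card α ≤ n + 1)}

/-- Minimum degree (via neighbor set cardinalities). -/
noncomputable def SimpleGraph.minDeg (G : SimpleGraph α) : ℕ :=
  sInf {d | ∃ v, (G.neighborSet v).ncard = d}

/-- A minimum vertex cut. -/
def SimpleGraph.IsMinVertexCut (G : SimpleGraph α) (S : Set α) : Prop :=
  G.IsVertexCut S ∧ S.ncard = G.vConn

/-- `G` is super connected: every minimum vertex cut is the neighborhood of a
vertex of minimum degree. -/
def SimpleGraph.SuperConnected (G : SimpleGraph α) : Prop :=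
  ∀ S : Set α, G.IsMinVertexCut S →
    ∃ v, (G.neighborSet v).ncard = G.minDeg ∧ S = G.neighborSet v

/-- `(X, Y)` is a bipartition of `G`. -/
def SimpleGraph.IsBipartition (G : SimpleGraph α) (X Y : Set α) : Prop :=
  Disjoint X Y ∧ X ∪ Y = Set.univ ∧
    ∀ u v, G.Adj u v → (u ∈ X ∧ v ∈ Y) ∨ (u ∈ Y ∧ v ∈ X)

/-- The graph `G̃ₙ`: vertex set `α × ZMod n`, with for each `i` a copy `Hᵢ`
of `G` on `(Xᵢ, Yᵢ)` and a copy `Hᵢ'` of `G` on `(Xᵢ₊₁, Yᵢ)`. -/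
def tildeG (G : SimpleGraph α) (X Y : Set α) (n : ℕ) :
    SimpleGraph (α × ZMod n) where
  Adj a b := G.Adj a.1 b.1 ∧
    ((a.1 ∈ X ∧ b.1 ∈ Y ∧ (a.2 = b.2 ∨ a.2 = b.2 + 1)) ∨
     (a.1 ∈ Y ∧ b.1 ∈ X ∧ (b.2 = a.2 ∨ b.2 = a.2 + 1)))
  symm := ⟨fun a b h => ⟨h.1.symm, by tauto⟩⟩
  loopless := ⟨fun a h => G.loopless.1 a.1 h.1⟩

/-!
A walk in `G × H` is the same thing as a pair of walks of equal length in `G` and in `H`.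
If `G` and `H` are bipartite, a walk between `(a, v)` and `(b, v)` with `a ~ b` would pair an
odd walk in `G` with a closed, hence even, walk in `H`. Conversely, if `G` contains an odd
closed walk, then between any two vertices of `G` there are walks of every sufficiently large
length, and a walk in `H` can be lengthened by any even number by going back and forth along
an edge; so any two vertices of `G × H` are joined by walks of equal length in the factors.
-/

namespace SimpleGraph

variable {G : SimpleGraph α} {H : SimpleGraph β}

theorem Connected.exists_adj (hG : G.Connected) (he : G.edgeSet.Nonempty) (v : α) :
    ∃ w, G.Adj v w := by
  obtain ⟨e, he⟩ := he
  induction e using Sym2.ind with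
  | _ a b =>
    have : Nontrivial α := ⟨⟨a, b, G.ne_of_adj he⟩⟩
    exact hG.preconnected.exists_adj_of_nontrivial v

theorem Adj.exists_loop_length_eq_two_mul {v w : α} (h : G.Adj v w) (k : ℕ) :
    ∃ c : G.Walk v v, c.length = 2 * k := by
  induction k with
  | zero => exact ⟨Walk.nil, rfl⟩
  | succ k ih =>
    obtain ⟨c, hc⟩ := ih
    exact ⟨Walk.cons h (Walk.cons h.symm c), by simp only [Walk.length_cons, hc]; ring⟩

theorem Connected.exists_walk_length_eq_of_not_colorable_two (hG : G.Connected)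
    (h2 : ¬ G.Colorable 2) (u v : α) :
    ∃ N, ∀ n ≥ N, ∃ p : G.Walk u v, p.length = n := by
  obtain ⟨w, c, hodd⟩ : ∃ (w : α) (c : G.Walk w w), Odd c.length := by
    simpa [two_colorable_iff_forall_loop_even] using h2
  have hw : G.Adj w c.snd := c.adj_snd (Walk.not_nil_iff_lt_length.mpr hodd.pos)
  obtain ⟨p₁⟩ := hG.preconnected u w
  obtain ⟨p₂⟩ := hG.preconnected w v
  refine ⟨p₁.length + c.length + p₂.length, fun n hn => ?_⟩
  obtain ⟨t, ht⟩ := hodd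
  rcases Nat.even_or_odd (n - p₁.length - p₂.length) with ⟨k, hk⟩ | ⟨k, hk⟩
  · obtain ⟨d, hd⟩ := hw.exists_loop_length_eq_two_mul k
    exact ⟨p₁.append (d.append p₂), by simp only [Walk.length_append]; omega⟩
  · obtain ⟨d, hd⟩ := hw.exists_loop_length_eq_two_mul (k - t)
    exact ⟨p₁.append (d.append (c.append p₂)), by simp only [Walk.length_append]; omega⟩

def tensorProdFst (G : SimpleGraph α) (H : SimpleGraph β) : G.tensorProd H →g G :=
  ⟨Prod.fst, fun h => h.1⟩

def tensorProdSnd (G : SimpleGraph α) (H : SimpleGraph β) : G.tensorProd H →g H :=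
  ⟨Prod.snd, fun h => h.2⟩

def tensorProdComm (G : SimpleGraph α) (H : SimpleGraph β) :
    G.tensorProd H ≃g H.tensorProd G where
  toEquiv := Equiv.prodComm α β
  map_rel_iff' := And.comm

theorem tensorProd_reachable_of_length_eq :
    ∀ {u u' : α} {v v' : β} (p : G.Walk u u') (q : H.Walk v v'),
      p.length = q.length → (G.tensorProd H).Reachable (u, v) (u', v')
  | _, _, _, _, .nil, .nil, _ => Reachable.refl _
  | _, _, _, _, .cons h p, .cons h' q, hl =>
    (show (G.tensorProd H).Adj _ _ from ⟨h, h'⟩).reachable.trans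
      (tensorProd_reachable_of_length_eq p q (by simpa using hl))
  | _, _, _, _, .nil, .cons _ _, hl | _, _, _, _, .cons _ _, .nil, hl => by simp at hl

theorem tensorProd_reachable_iff {u u' : α} {v v' : β} :
    (G.tensorProd H).Reachable (u, v) (u', v') ↔
      ∃ (p : G.Walk u u') (q : H.Walk v v'), p.length = q.length :=
  ⟨fun ⟨r⟩ => ⟨r.map (tensorProdFst G H), r.map (tensorProdSnd G H),
      (r.length_map _).trans (r.length_map _).symm⟩,
    fun ⟨p, q, hl⟩ => tensorProd_reachable_of_length_eq p q hl⟩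

theorem not_connected_tensorProd_of_colorable_two [Nonempty β] (hG : G.Colorable 2)
    (hH : H.Colorable 2) (he : G.edgeSet.Nonempty) : ¬ (G.tensorProd H).Connected := by
  intro hGH
  obtain ⟨e, he⟩ := he
  induction e using Sym2.ind with
  | _ a b =>
    obtain ⟨v⟩ := ‹Nonempty β›
    obtain ⟨p, q, hl⟩ := tensorProd_reachable_iff.mp (hGH.preconnected (a, v) (b, v))
    have hp : Even (p.concat he.symm).length := two_colorable_iff_forall_loop_even.mp hG a _
    have hq : Even q.length := two_colorable_iff_forall_loop_even.mp hH v q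
    rw [Walk.length_concat, hl] at hp
    exact Nat.not_even_iff_odd.mpr hq.add_one hp

theorem connected_tensorProd_of_not_colorable_two (hG : G.Connected) (hH : H.Connected)
    (hHe : H.edgeSet.Nonempty) (h2 : ¬ G.Colorable 2) : (G.tensorProd H).Connected := by
  have : Nonempty (α × β) := ⟨(hG.nonempty.some, hH.nonempty.some)⟩
  refine Connected.mk fun ⟨u, v⟩ ⟨u', v'⟩ => ?_
  obtain ⟨N, hN⟩ := hG.exists_walk_length_eq_of_not_colorable_two h2 u u'
  obtain ⟨q⟩ := hH.preconnected v v'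
  obtain ⟨w, hw⟩ := hH.exists_adj hHe v'
  obtain ⟨c, hc⟩ := hw.exists_loop_length_eq_two_mul N
  obtain ⟨p, hp⟩ := hN (q.append c).length (by rw [Walk.length_append, hc]; omega)
  exact tensorProd_reachable_of_length_eq p (q.append c) hp

end SimpleGraph

/-- The direct product of two nontrivial connected graphs is connected iff
at least one factor is not bipartite. -/
theorem stmt_0 (G : SimpleGraph α) (H : SimpleGraph β)
    (hGc : G.Connected) (hHc : H.Connected)
    (hGe : G.edgeSet.Nonempty) (hHe : H.edgeSet.Nonempty) :
    (G.tensorProd H).Connected ↔ (¬ G.Colorable 2 ∨ ¬ H.Colorable 2) := by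
  refine ⟨fun hGH => ?_, ?_⟩
  · have : Nonempty β := hHc.nonempty
    by_contra! h
    exact not_connected_tensorProd_of_colorable_two h.1 h.2 hGe hGH
  · rintro (hG | hH)
    · exact connected_tensorProd_of_not_colorable_two hGc hHc hHe hG
    · exact (tensorProdComm G H).connected_iff.mpr
        (connected_tensorProd_of_not_colorable_two hHc hGc hGe hH)
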